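/- arXiv:2407.11011 — 3 statements merged into one kernel-verified Lean document; each statement's English description precedes it below -/
import Mathlib

section
/- Let n ≥ 2 and let x = (x¹, …, xⁿ) be a point cloud in ℝ³ whose points are pairwise distinct; set m = min over pairs k ≠ l of ‖xᵏ − xˡ‖₂. If the perturbation δ = (δ¹, …, δⁿ) satisfies ‖δʲ‖₂ ≤ m/2 for every j, then the Chamfer distance between the perturbed and clean point clouds satisfies 𝒟_c(x + δ, x) = (2/n) · Σ_{j=1}^{n} ‖δʲ‖₂². -/
/-!
Every clean point is at distance at least `m` from every other clean point, and each perturbation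
moves a point by at most `m / 2`. By the triangle inequality, `x j + δ j` is still at least
`m / 2 ≥ ‖δ j‖` away from every other clean point, and `x k` at least `m / 2 ≥ ‖δ k‖` away from
every other perturbed point. So in both halves of the Chamfer distance each point is matched with
its own partner, and each half contributes `(1/n) Σ_j ‖δ j‖²`.
-/

open scoped BigOperators

/-- The Chamfer distance between two point clouds `a, b` with `n` points in ℝ³:
`𝒟_c(a, b) = (1/n) Σ_j min_k ‖aʲ − bᵏ‖² + (1/n) Σ_k min_j ‖bᵏ − aʲ‖²`. -/
noncomputable def chamferDist (n : ℕ) (a b : Fin n → EuclideanSpace ℝ (Fin 3)) : ℝ :=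
  (1 / n : ℝ) * ∑ j : Fin n, (⨅ k : Fin n, ‖a j - b k‖ ^ 2) +
  (1 / n : ℝ) * ∑ k : Fin n, (⨅ j : Fin n, ‖b k - a j‖ ^ 2)

theorem ciInf_eq_of_forall_apply_le {ι : Type*} [Finite ι] (f : ι → ℝ) (j : ι)
    (h : ∀ k, f j ≤ f k) : ⨅ k, f k = f j :=
  have : Nonempty ι := ⟨j⟩
  le_antisymm (ciInf_le (Finite.bddBelow_range f) j) (le_ciInf h)

section PerturbedPointCloud

variable {ι E : Type*} [SeminormedAddCommGroup E]

theorem iInf_norm_sub_le_of_ne (x : ι → E) {a b : ι} (hab : a ≠ b) :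
    ⨅ p : {p : ι × ι // p.1 ≠ p.2}, ‖x p.1.1 - x p.1.2‖ ≤ ‖x a - x b‖ :=
  ciInf_le (f := fun p : {p : ι × ι // p.1 ≠ p.2} => ‖x p.1.1 - x p.1.2‖)
    ⟨0, Set.forall_mem_range.2 fun _ => norm_nonneg _⟩ ⟨(a, b), hab⟩

theorem norm_le_norm_sub_add_of_le_half {a b u v : E} {r : ℝ} (hr : r ≤ ‖a - b‖)
    (hu : ‖u‖ ≤ r / 2) (hv : ‖v‖ ≤ r / 2) : ‖v‖ ≤ ‖a - (b + u)‖ := by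
  have htri : ‖a - b‖ ≤ ‖a - (b + u)‖ + ‖u‖ := by
    simpa only [sub_add_eq_sub_sub, sub_add_cancel] using norm_add_le (a - (b + u)) u
  linarith

variable [Finite ι] {x δ : ι → E} {r : ℝ}

theorem iInf_norm_add_sub_sq_eq (hr : ∀ a b, a ≠ b → r ≤ ‖x a - x b‖)
    (hδ : ∀ j, ‖δ j‖ ≤ r / 2) (j : ι) : ⨅ k, ‖x j + δ j - x k‖ ^ 2 = ‖δ j‖ ^ 2 := by
  have hself : ‖x j + δ j - x j‖ = ‖δ j‖ := by rw [add_sub_cancel_left]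
  rw [ciInf_eq_of_forall_apply_le _ j, hself]
  intro k
  rcases eq_or_ne k j with rfl | hkj
  · exact le_rfl
  · rw [hself, norm_sub_rev]
    gcongr
    exact norm_le_norm_sub_add_of_le_half (hr k j hkj) (hδ j) (hδ j)

theorem iInf_norm_sub_add_sq_eq (hr : ∀ a b, a ≠ b → r ≤ ‖x a - x b‖)
    (hδ : ∀ j, ‖δ j‖ ≤ r / 2) (k : ι) : ⨅ j, ‖x k - (x j + δ j)‖ ^ 2 = ‖δ k‖ ^ 2 := by
  have hself : ‖x k - (x k + δ k)‖ = ‖δ k‖ := by rw [sub_add_cancel_left, norm_neg]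
  rw [ciInf_eq_of_forall_apply_le _ k, hself]
  intro j
  rcases eq_or_ne j k with rfl | hjk
  · exact le_rfl
  · rw [hself]
    gcongr
    exact norm_le_norm_sub_add_of_le_half (hr k j hjk.symm) (hδ j) (hδ k)

end PerturbedPointCloud

theorem chamfer_eq_of_small_perturbation_general
    (n : ℕ)
    (x δ : Fin n → EuclideanSpace ℝ (Fin 3))
    (m : ℝ)
    (hm : m = ⨅ p : {p : Fin n × Fin n // p.1 ≠ p.2}, ‖x p.1.1 - x p.1.2‖)
    (hδ : ∀ j, ‖δ j‖ ≤ m / 2) :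
    chamferDist n (fun j => x j + δ j) x = (2 / n : ℝ) * ∑ j : Fin n, ‖δ j‖ ^ 2 := by
  have hsep : ∀ a b, a ≠ b → m ≤ ‖x a - x b‖ := fun a b hab =>
    hm ▸ iInf_norm_sub_le_of_ne x hab
  simp only [chamferDist, iInf_norm_add_sub_sq_eq hsep hδ, iInf_norm_sub_add_sq_eq hsep hδ]
  ring

/-- If every perturbation has norm at most half the minimal
pairwise distance `m` of the (pairwise distinct) clean points, then
`𝒟_c(x + δ, x) = (2/n) Σ_j ‖δʲ‖²`. -/
theorem chamfer_eq_of_small_perturbation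
    (n : ℕ) (hn : 2 ≤ n)
    (x δ : Fin n → EuclideanSpace ℝ (Fin 3))
    (hx : Function.Injective x)
    (m : ℝ)
    (hm : m = ⨅ p : {p : Fin n × Fin n // p.1 ≠ p.2}, ‖x p.1.1 - x p.1.2‖)
    (hδ : ∀ j, ‖δ j‖ ≤ m / 2) :
    chamferDist n (fun j => x j + δ j) x = (2 / n : ℝ) * ∑ j : Fin n, ‖δ j‖ ^ 2 :=
  chamfer_eq_of_small_perturbation_general n x δ m hm hδ
end

section
/- Let N ≥ 1, n ≥ 2, and for each i ∈ {1, …, N} let x_i = (x_i¹, …, x_iⁿ) be a point cloud in ℝ³ whose points are pairwise distinct, with m_i = min over pairs k ≠ l of ‖x_iᵏ − x_iˡ‖₂. Let S be the set of perturbation families δ = (δ_1, …, δ_N), each δ_i = (δ_i¹, …, δ_iⁿ) with δ_iʲ ∈ ℝ³, satisfying ‖δ_iʲ‖₂ ≤ m_i/2 for all i, j. Let L > 0, β > 0, and for each i let ℓ_i : (ℝ³)ⁿ → ℝ be L-Lipschitz with respect to the ℓ₂ (Frobenius) norm on (ℝ³)ⁿ. Define L₂(δ) = (1/N) Σ_{i=1}^{N}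 [ ℓ_i(δ_i) + β · 𝒟_c(x_i + δ_i, x_i) ]. Suppose δ* ∈ S minimizes L₂ over S, and set Δ = L₂(0) − L₂(δ*). Then L² ≥ 8(β/n)Δ, and there exists an index i such that the Frobenius norm ‖δ_i*‖₂ = (Σ_j ‖δ_i*ʲ‖₂²)^{1/2} satisfies ‖δ_i*‖₂ ≥ (L − √(L² − 8(β/n)Δ)) / (4β/n). -/
open scoped BigOperators

lemma chamfer_formula (n : ℕ) (hn : 0 < n) (x δ : Fin n → EuclideanSpace ℝ (Fin 3)) (m : ℝ)
    (hmle : ∀ k l, k ≠ l → m ≤ ‖x k - x l‖) (hδ : ∀ j, ‖δ j‖ ≤ m / 2) :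
    chamferDist n (fun j => x j + δ j) x = (2 / n) * ∑ j : Fin n, ‖δ j‖ ^ 2 := by
  haveI : NeZero n := ⟨hn.ne'⟩
  have key : ∀ j k : Fin n, j ≠ k → ∀ c : EuclideanSpace ℝ (Fin 3), ‖c‖ ≤ m / 2 →
      ‖c‖ ^ 2 ≤ ‖(x j + δ j) - x k‖ ^ 2 := by
    intro j k hjk c hc
    have h1 : m ≤ ‖x j - x k‖ := hmle j k hjk
    have h2 : ‖x j - x k‖ ≤ ‖(x j + δ j) - x k‖ + ‖δ j‖ := by
      have := norm_sub_le ((x j + δ j) - x k) (δ j)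
      have e : (x j + δ j) - x k - δ j = x j - x k := by abel
      rw [e] at this; linarith
    have h3 : m / 2 ≤ ‖(x j + δ j) - x k‖ := by
      have := hδ j; linarith
    have h4 : ‖c‖ ≤ ‖(x j + δ j) - x k‖ := le_trans hc h3
    exact pow_le_pow_left₀ (norm_nonneg _) h4 2
  have inf1 : ∀ j : Fin n, (⨅ k : Fin n, ‖(x j + δ j) - x k‖ ^ 2) = ‖δ j‖ ^ 2 := by
    intro j
    apply le_antisymm
    · have := ciInf_le (Finite.bddBelow_range fun k => ‖(x j + δ j) - x k‖ ^ 2) j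
      simpa using this
    · apply le_ciInf
      intro k
      by_cases h : j = k
      · subst h; simp
      · exact key j k h (δ j) (hδ j)
  have inf2 : ∀ k : Fin n, (⨅ j : Fin n, ‖x k - (x j + δ j)‖ ^ 2) = ‖δ k‖ ^ 2 := by
    intro k
    apply le_antisymm
    · have := ciInf_le (Finite.bddBelow_range fun j => ‖x k - (x j + δ j)‖ ^ 2) k
      simp only [sub_add_cancel_left, norm_neg] at this
      simpa using this
    · apply le_ciInf
      intro j
      by_cases h : j = k
      · subst h; simp
      · have := key j k h (δ k) (hδ k)
        have e : ‖x k - (x j + δ j)‖ = ‖(x j + δ j) - x k‖ := by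
          rw [← norm_neg]; congr 1; abel
        rw [e]; exact this
  simp only [chamferDist, inf1, inf2]
  ring

set_option maxHeartbeats 1000000 in
/-- lower bound on the norm of an optimal FC-EM perturbation.
For `N` point clouds `xᵢ` with pairwise distinct points and minimal pairwise
distances `mᵢ`, an `L`-Lipschitz (w.r.t. the Frobenius norm) loss `ℓᵢ` per
sample, and the regularized objective
`L₂(δ) = (1/N) Σᵢ [ℓᵢ(δᵢ) + β·𝒟_c(xᵢ + δᵢ, xᵢ)]`, any minimizer `δ*` over
the admissible set `S = {δ | ‖δᵢʲ‖ ≤ mᵢ/2}` satisfies `L² ≥ 8(β/n)Δ` and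
`‖δᵢ*‖₂ ≥ (L − √(L² − 8(β/n)Δ)) / (4β/n)` for some index `i`, where
`Δ = L₂(0) − L₂(δ*)`. -/
theorem fc_em_optimal_perturbation_lower_bound
    (N n : ℕ) (hN : 1 ≤ N) (hn : 2 ≤ n)
    (x : Fin N → Fin n → EuclideanSpace ℝ (Fin 3))
    (hx : ∀ i, Function.Injective (x i))
    (m : Fin N → ℝ)
    (hm : ∀ i, m i = ⨅ p : {p : Fin n × Fin n // p.1 ≠ p.2}, ‖x i p.1.1 - x i p.1.2‖)
    (S : Set (Fin N → Fin n → EuclideanSpace ℝ (Fin 3)))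
    (hS : S = {δ | ∀ i j, ‖δ i j‖ ≤ m i / 2})
    (L β : ℝ) (hL : 0 < L) (hβ : 0 < β)
    (ℓ : Fin N → (Fin n → EuclideanSpace ℝ (Fin 3)) → ℝ)
    (hℓ : ∀ i, ∀ d d' : Fin n → EuclideanSpace ℝ (Fin 3),
      |ℓ i d - ℓ i d'| ≤ L * Real.sqrt (∑ j : Fin n, ‖d j - d' j‖ ^ 2))
    (L₂ : (Fin N → Fin n → EuclideanSpace ℝ (Fin 3)) → ℝ)
    (hL₂ : ∀ δ, L₂ δ = (1 / N : ℝ) *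
      ∑ i : Fin N, (ℓ i (δ i) + β * chamferDist n (fun j => x i j + δ i j) (x i)))
    (δstar : Fin N → Fin n → EuclideanSpace ℝ (Fin 3))
    (hmem : δstar ∈ S) (hmin : ∀ δ ∈ S, L₂ δstar ≤ L₂ δ)
    (Δ : ℝ) (hΔ : Δ = L₂ 0 - L₂ δstar) :
    L ^ 2 ≥ 8 * (β / n) * Δ ∧
    ∃ i : Fin N, Real.sqrt (∑ j : Fin n, ‖δstar i j‖ ^ 2) ≥
      (L - Real.sqrt (L ^ 2 - 8 * (β / n) * Δ)) / (4 * (β / n)) := by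
  have hn0 : (0 : ℝ) < n := by
    have : (0:ℕ) < n := by omega
    exact_mod_cast this
  have hN0 : (0 : ℝ) < N := by
    have : (0:ℕ) < N := by omega
    exact_mod_cast this
  -- m i is a positive lower bound on pairwise distances
  haveI hne : Nonempty {p : Fin n × Fin n // p.1 ≠ p.2} := by
    refine ⟨⟨(⟨0, by omega⟩, ⟨1, by omega⟩), ?_⟩⟩
    simp [Fin.ext_iff]
  have hmle : ∀ i, ∀ k l : Fin n, k ≠ l → m i ≤ ‖x i k - x i l‖ := by
    intro i k l hkl
    rw [hm i]
    have hb : BddBelow (Set.range (fun p : {p : Fin n × Fin n // p.1 ≠ p.2} =>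
        ‖x i p.1.1 - x i p.1.2‖)) := ⟨0, by rintro y ⟨p, rfl⟩; positivity⟩
    exact ciInf_le hb ⟨(k, l), hkl⟩
  have hmpos : ∀ i, 0 < m i := by
    intro i
    obtain ⟨p, hp⟩ := exists_eq_ciInf_of_finite
      (f := fun p : {p : Fin n × Fin n // p.1 ≠ p.2} => ‖x i p.1.1 - x i p.1.2‖)
    rw [hm i, ← hp]
    have : x i p.1.1 ≠ x i p.1.2 := fun h => p.2 (hx i h)
    exact norm_pos_iff.mpr (sub_ne_zero.mpr this)
  set a : ℝ := 2 * β / n with ha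
  have ha0 : 0 < a := by positivity
  -- L₂ on S
  have hL₂S : ∀ δ ∈ S, L₂ δ = (1 / N : ℝ) *
      ∑ i : Fin N, (ℓ i (δ i) + a * ∑ j : Fin n, ‖δ i j‖ ^ 2) := by
    intro δ hδ
    rw [hS] at hδ
    rw [hL₂]
    congr 1
    apply Finset.sum_congr rfl
    intro i _
    rw [chamfer_formula n (by omega) (x i) (δ i) (m i) (hmle i) (hδ i)]
    ring
  have h0S : (0 : Fin N → Fin n → EuclideanSpace ℝ (Fin 3)) ∈ S := by
    rw [hS]
    intro i j
    simp only [Pi.zero_apply, norm_zero]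
    have := hmpos i; linarith
  -- per-sample radii
  set r : Fin N → ℝ := fun i => Real.sqrt (∑ j : Fin n, ‖δstar i j‖ ^ 2) with hr
  have hrnn : ∀ i, 0 ≤ r i := fun i => Real.sqrt_nonneg _
  have hrsq : ∀ i, r i ^ 2 = ∑ j : Fin n, ‖δstar i j‖ ^ 2 := by
    intro i
    rw [hr]
    exact Real.sq_sqrt (by positivity)
  haveI : Nonempty (Fin N) := ⟨⟨0, by omega⟩⟩
  -- key inequality: exists i with Δ ≤ L * r i - a * r i ^ 2
  have hΔle : ∃ i : Fin N, Δ ≤ L * r i - a * r i ^ 2 := by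
    have hterm : ∀ i : Fin N,
        ℓ i 0 - ℓ i (δstar i) - a * ∑ j : Fin n, ‖δstar i j‖ ^ 2
        ≤ L * r i - a * r i ^ 2 := by
      intro i
      have hlip := hℓ i 0 (δstar i)
      have e : (∑ j : Fin n, ‖(0 : Fin n → EuclideanSpace ℝ (Fin 3)) j - δstar i j‖ ^ 2)
          = ∑ j : Fin n, ‖δstar i j‖ ^ 2 := by
        apply Finset.sum_congr rfl
        intro j _
        rw [Pi.zero_apply, zero_sub, norm_neg]
      rw [e] at hlip
      have h1 : ℓ i 0 - ℓ i (δstar i) ≤ L * r i := le_trans (le_abs_self _) hlip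
      rw [hrsq i]
      linarith
    have hΔ' : Δ = (1 / N : ℝ) * ∑ i : Fin N,
        (ℓ i 0 - ℓ i (δstar i) - a * ∑ j : Fin n, ‖δstar i j‖ ^ 2) := by
      rw [hΔ, hL₂S 0 h0S, hL₂S δstar hmem, ← mul_sub, ← Finset.sum_sub_distrib]
      congr 1
      apply Finset.sum_congr rfl
      intro i _
      simp only [Pi.zero_apply, norm_zero]
      simp
      ring
    by_contra hcon
    push_neg at hcon
    have hsumlt : ∑ i : Fin N, (ℓ i 0 - ℓ i (δstar i) - a * ∑ j : Fin n, ‖δstar i j‖ ^ 2)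
        < ∑ _i : Fin N, Δ :=
      Finset.sum_lt_sum_of_nonempty Finset.univ_nonempty
        (fun i _ => lt_of_le_of_lt (hterm i) (hcon i))
    have hNd : (∑ _i : Fin N, Δ) = (N : ℝ) * Δ := by
      rw [Finset.sum_const, Finset.card_univ, Fintype.card_fin, nsmul_eq_mul]
    have hfin : Δ < Δ := by
      calc Δ = (1 / N : ℝ) * ∑ i : Fin N,
            (ℓ i 0 - ℓ i (δstar i) - a * ∑ j : Fin n, ‖δstar i j‖ ^ 2) := hΔ'
        _ < (1 / N : ℝ) * ((N : ℝ) * Δ) := by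
            rw [← hNd]; exact mul_lt_mul_of_pos_left hsumlt (by positivity)
        _ = Δ := by field_simp
    exact lt_irrefl _ hfin
  obtain ⟨i, hi⟩ := hΔle
  -- quadratic analysis
  have hquad : a * r i ^ 2 - L * r i + Δ ≤ 0 := by linarith
  have hdisc : L ^ 2 - 4 * a * Δ ≥ 0 := by
    nlinarith [sq_nonneg (2 * a * r i - L), hrnn i, ha0]
  have h8 : 8 * (β / n) * Δ = 4 * a * Δ := by
    rw [ha]; ring
  constructor
  · rw [h8]; linarith
  · refine ⟨i, ?_⟩
    have hseq : L ^ 2 - 8 * (β / n) * Δ = L ^ 2 - 4 * a * Δ := by rw [h8]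
    set s := Real.sqrt (L ^ 2 - 8 * (β / n) * Δ) with hs
    have hs0 : 0 ≤ s := Real.sqrt_nonneg _
    have hssq : s ^ 2 = L ^ 2 - 4 * a * Δ := by
      rw [hs, hseq, Real.sq_sqrt (by linarith)]
    have hkey : (2 * a * r i - L) ^ 2 ≤ s ^ 2 := by
      rw [hssq]; nlinarith [ha0]
    have h2 : -s ≤ 2 * a * r i - L := by nlinarith [hs0]
    have h4a : 4 * (β / n) = 2 * a := by
      rw [ha]; ring
    rw [ge_iff_le, h4a, div_le_iff₀ (by linarith)]
    linarith
end

section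
/- Let C ≥ 2, d ≥ 1, and 0 ≤ γ < 1. Let W ∈ ℝ^{C×d} be a matrix whose rows W_1, …, W_C each have ℓ₂ norm exactly √d and satisfy ⟨W_c, W_{c'}⟩ ≤ γ·d for all c ≠ c' (i.e., the cosine similarity of any two distinct rows is at most γ). Let x ∈ ℝ^d, y ∈ {1, …, C}, and let ℒ = ℒ(x, y; W) be the margin loss. If β₀ > ℒ / (d(1 − γ)) and δ = β₀ · W_y, then for every c ≠ y one has ⟨W_y, x + δ⟩ > ⟨W_c, x + δ⟩; that is, the perturbed example (x + δ, y) is strictly correctly classified by W. -/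
/-! Adding `β₀ • W y` raises the logit of `y` by `β₀ d` and that of any `c ≠ y` by at most
`β₀ γ d`, so it closes a gap of up to `β₀ d (1 - γ)`, which exceeds the margin loss. -/

open scoped BigOperators

/-- The margin loss `ℒ(x, y; W) = max(max_{t ≠ y} ⟨W_t, x⟩ − ⟨W_y, x⟩, 0)`
of a linear classifier with weight rows `W_c`. -/
noncomputable def marginLoss {C d : ℕ} (W : Fin C → EuclideanSpace ℝ (Fin d))
    (x : EuclideanSpace ℝ (Fin d)) (y : Fin C) : ℝ :=
  max (⨆ t : {t : Fin C // t ≠ y}, ((inner ℝ (W t.1) x : ℝ) - (inner ℝ (W y) x : ℝ))) 0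

open RealInnerProductSpace

theorem inner_add_smul_lt_of_sub_lt {E : Type*} [NormedAddCommGroup E] [InnerProductSpace ℝ E]
    {u v x : E} {β : ℝ} (h : ⟪v, x⟫ - ⟪u, x⟫ < β * (⟪u, u⟫ - ⟪v, u⟫)) :
    ⟪v, x + β • u⟫ < ⟪u, x + β • u⟫ := by
  simp only [inner_add_right, inner_smul_right]
  linarith

section marginLoss

variable {C d : ℕ} (W : Fin C → EuclideanSpace ℝ (Fin d)) (x : EuclideanSpace ℝ (Fin d)) (y : Fin C)

theorem marginLoss_nonneg : 0 ≤ marginLoss W x y :=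
  le_max_right _ _

theorem inner_sub_inner_le_marginLoss {c : Fin C} (hc : c ≠ y) :
    ⟪W c, x⟫ - ⟪W y, x⟫ ≤ marginLoss W x y :=
  (le_ciSup (f := fun t : {t : Fin C // t ≠ y} => ⟪W t.1, x⟫ - ⟪W y, x⟫)
    (Set.finite_range _).bddAbove ⟨c, hc⟩).trans (le_max_left _ _)

end marginLoss

theorem poison_along_row_correctly_classifies_general
    (C d : ℕ) (hd : 1 ≤ d)
    (γ : ℝ) (hγ1 : γ < 1)
    (W : Fin C → EuclideanSpace ℝ (Fin d))
    (hWnorm : ∀ c, ‖W c‖ = Real.sqrt d)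
    (hWsim : ∀ c c', c ≠ c' → (inner ℝ (W c) (W c') : ℝ) ≤ γ * d)
    (x : EuclideanSpace ℝ (Fin d)) (y : Fin C)
    (β₀ : ℝ) (hβ₀ : β₀ > marginLoss W x y / (d * (1 - γ)))
    (δ : EuclideanSpace ℝ (Fin d)) (hδ : δ = β₀ • W y) :
    ∀ c, c ≠ y → (inner ℝ (W y) (x + δ) : ℝ) > (inner ℝ (W c) (x + δ) : ℝ) := by
  intro c hc
  subst hδ
  have hd_pos : (0 : ℝ) < d := by exact_mod_cast hd
  have hscale_pos : 0 < d * (1 - γ) := mul_pos hd_pos (by linarith)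
  have hβ₀_pos : 0 < β₀ :=
    (div_nonneg (marginLoss_nonneg W x y) hscale_pos.le).trans_lt hβ₀
  have hWy : ⟪W y, W y⟫ = d := by
    rw [real_inner_self_eq_norm_sq, hWnorm, Real.sq_sqrt hd_pos.le]
  apply inner_add_smul_lt_of_sub_lt
  calc ⟪W c, x⟫ - ⟪W y, x⟫ ≤ marginLoss W x y := inner_sub_inner_le_marginLoss W x y hc
    _ < β₀ * (d * (1 - γ)) := (div_lt_iff₀ hscale_pos).mp hβ₀
    _ ≤ β₀ * (⟪W y, W y⟫ - ⟪W c, W y⟫) := by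
      gcongr
      linarith [hWsim c y hc]

/-- If the rows of `W` have norm `√d` and pairwise inner products
at most `γ·d` (cosine similarity at most `γ`), then for any
`β₀ > ℒ(x,y;W) / (d(1−γ))`, the perturbation `δ = β₀·W_y` makes `(x + δ, y)`
strictly correctly classified by `W`. -/
theorem poison_along_row_correctly_classifies
    (C d : ℕ) (hC : 2 ≤ C) (hd : 1 ≤ d)
    (γ : ℝ) (hγ0 : 0 ≤ γ) (hγ1 : γ < 1)
    (W : Fin C → EuclideanSpace ℝ (Fin d))
    (hWnorm : ∀ c, ‖W c‖ = Real.sqrt d)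
    (hWsim : ∀ c c', c ≠ c' → (inner ℝ (W c) (W c') : ℝ) ≤ γ * d)
    (x : EuclideanSpace ℝ (Fin d)) (y : Fin C)
    (β₀ : ℝ) (hβ₀ : β₀ > marginLoss W x y / (d * (1 - γ)))
    (δ : EuclideanSpace ℝ (Fin d)) (hδ : δ = β₀ • W y) :
    ∀ c, c ≠ y → (inner ℝ (W y) (x + δ) : ℝ) > (inner ℝ (W c) (x + δ) : ℝ) :=
  poison_along_row_correctly_classifies_general C d hd γ hγ1 W hWnorm hWsim x y β₀ hβ₀ δ hδ
end
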